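/- Let I ⊆ ℝ be an open interval, g : I → ℝ smooth and nowhere zero, and T, U : I → ℝ two solutions of the linear ODE y'' − (g'(x)/(2g(x)))·y' + g(x)·y = 0. On I × ℝ², with coordinates (x, y, v), define the smooth vector fields A = (1, v, (g'(x)/(2g(x)))·v − g(x)·y ) and, for ξ(x,y) = −T'(x)·y/g(x), η(x,y) = T(x)·y², the first prolongation Ẋ₄ = ( ξ , η , ∂η/∂x + v·∂η/∂y − v·(∂ξ/∂x + v·∂ξ/∂y) ). Then the Lie bracket satisfies [Ẋ₄, A] = −( ∂ξ/∂x + v·∂ξ/∂y )·A, i.e. X₄ = −(T'/g)·y·∂/∂x + T·y²·∂/∂y is a Lie point symmetry of the ODE; the same identity holds with T replaced by U, so X₅ = −(U'/g)·y·∂/∂x + U·y²·∂/∂y is also a point symmetry. -/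

import Mathlib

set_option maxHeartbeats 1000000

open Filter Topology


/-- The vector field `A = ∂/∂x + v ∂/∂y + ω(x,y,v) ∂/∂v` on `ℝ³` associated with the
second-order ODE `y'' = (g'/(2g))·y' − g·y`. -/
noncomputable def odeField (g : ℝ → ℝ) (p : ℝ × ℝ × ℝ) : ℝ × ℝ × ℝ :=
  (1, p.2.2, deriv g p.1 / (2 * g p.1) * p.2.2 - g p.1 * p.2.1)

/-- The component `ξ(x,y) = −T'(x)·y/g(x)` of the symmetry generator. -/
noncomputable def xiF (g T : ℝ → ℝ) (p : ℝ × ℝ × ℝ) : ℝ :=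
  -deriv T p.1 * p.2.1 / g p.1

/-- The component `η(x,y) = T(x)·y²` of the symmetry generator. -/
noncomputable def etaF (T : ℝ → ℝ) (p : ℝ × ℝ × ℝ) : ℝ :=
  T p.1 * p.2.1 ^ 2

/-- The first prolongation
`Ẋ = (ξ, η, ∂η/∂x + v·∂η/∂y − v·(∂ξ/∂x + v·∂ξ/∂y))`
of the vector field `X = ξ∂/∂x + η∂/∂y`. -/
noncomputable def prolong (g T : ℝ → ℝ) (p : ℝ × ℝ × ℝ) : ℝ × ℝ × ℝ :=
  (xiF g T p, etaF T p,
    fderiv ℝ (etaF T) p (1, 0, 0) + p.2.2 * fderiv ℝ (etaF T) p (0, 1, 0)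
      - p.2.2 * (fderiv ℝ (xiF g T) p (1, 0, 0) + p.2.2 * fderiv ℝ (xiF g T) p (0, 1, 0)))

private lemma hasDeriv_of_smooth {I : Set ℝ} (hI : IsOpen I) {f : ℝ → ℝ}
    (hf : ContDiffOn ℝ (⊤ : ℕ∞) f I) {x : ℝ} (hx : x ∈ I) :
    HasDerivAt f (deriv f x) x :=
  ((hf.differentiableOn (by norm_num)).differentiableAt (hI.mem_nhds hx)).hasDerivAt

private lemma smooth_deriv {I : Set ℝ} (hI : IsOpen I) {f : ℝ → ℝ}
    (hf : ContDiffOn ℝ (⊤ : ℕ∞) f I) : ContDiffOn ℝ (⊤ : ℕ∞) (deriv f) I :=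
  ((contDiffOn_infty_iff_deriv_of_isOpen hI).1 hf).2

private lemma comp1 {f : ℝ → ℝ} {f' : ℝ} {p : ℝ × ℝ × ℝ} (hf : HasDerivAt f f' p.1) :
    HasFDerivAt (fun q : ℝ × ℝ × ℝ => f q.1)
      (((1 : ℝ →L[ℝ] ℝ).smulRight f').comp (ContinuousLinearMap.fst ℝ ℝ (ℝ × ℝ))) p :=
  HasFDerivAt.comp p hf.hasFDerivAt hasFDerivAt_fst

private lemma hY (p : ℝ × ℝ × ℝ) :
    HasFDerivAt (fun q : ℝ × ℝ × ℝ => q.2.1)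
      ((ContinuousLinearMap.fst ℝ ℝ ℝ).comp (ContinuousLinearMap.snd ℝ ℝ (ℝ × ℝ))) p :=
  hasFDerivAt_fst.comp p hasFDerivAt_snd

private lemma hV (p : ℝ × ℝ × ℝ) :
    HasFDerivAt (fun q : ℝ × ℝ × ℝ => q.2.2)
      ((ContinuousLinearMap.snd ℝ ℝ ℝ).comp (ContinuousLinearMap.snd ℝ ℝ (ℝ × ℝ))) p :=
  hasFDerivAt_snd.comp p hasFDerivAt_snd

private lemma xi_eval {I : Set ℝ} (hI : IsOpen I) {g T : ℝ → ℝ}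
    (hg : ContDiffOn ℝ (⊤ : ℕ∞) g I) (hg0 : ∀ x ∈ I, g x ≠ 0)
    (hT : ContDiffOn ℝ (⊤ : ℕ∞) T I) {q : ℝ × ℝ × ℝ} (hq : q.1 ∈ I) (w : ℝ × ℝ × ℝ) :
    fderiv ℝ (xiF g T) q w =
      ((-(deriv (deriv T) q.1) * g q.1 + deriv T q.1 * deriv g q.1) / g q.1 ^ 2 * q.2.1) * w.1
        + (-(deriv T q.1) / g q.1) * w.2.1 := by
  have hxieq : xiF g T = fun q : ℝ × ℝ × ℝ => (-deriv T q.1 / g q.1) * q.2.1 := by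
    funext r; simp only [xiF]; ring
  have hc : HasDerivAt (fun s => -deriv T s / g s)
      ((-(deriv (deriv T) q.1) * g q.1 - -(deriv T q.1) * deriv g q.1) / g q.1 ^ 2) q.1 :=
    ((hasDeriv_of_smooth hI (smooth_deriv hI hT) hq).neg).div (hasDeriv_of_smooth hI hg hq)
      (hg0 _ hq)
  have h := (comp1 hc).mul (hY q)
  rw [hxieq, HasFDerivAt.fderiv (f := fun q : ℝ × ℝ × ℝ => (-deriv T q.1 / g q.1) * q.2.1) h]
  simp
  ring

private lemma eta_eval {I : Set ℝ} (hI : IsOpen I) {T : ℝ → ℝ}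
    (hT : ContDiffOn ℝ (⊤ : ℕ∞) T I) {q : ℝ × ℝ × ℝ} (hq : q.1 ∈ I) (w : ℝ × ℝ × ℝ) :
    fderiv ℝ (etaF T) q w =
      (deriv T q.1 * q.2.1 ^ 2) * w.1 + (2 * T q.1 * q.2.1) * w.2.1 := by
  have hetaeq : etaF T = fun q : ℝ × ℝ × ℝ => T q.1 * (q.2.1 * q.2.1) := by
    funext r; simp only [etaF]; ring
  have h := (comp1 (hasDeriv_of_smooth hI hT hq)).mul ((hY q).mul (hY q))
  rw [hetaeq, HasFDerivAt.fderiv (f := fun q : ℝ × ℝ × ℝ => T q.1 * (q.2.1 * q.2.1)) h]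
  simp
  ring

private lemma bracket_main {I : Set ℝ} (hI : IsOpen I) {g T : ℝ → ℝ}
    (hg : ContDiffOn ℝ (⊤ : ℕ∞) g I) (hg0 : ∀ x ∈ I, g x ≠ 0)
    (hT : ContDiffOn ℝ (⊤ : ℕ∞) T I)
    (hTode : ∀ x ∈ I,
      deriv (deriv T) x - deriv g x / (2 * g x) * deriv T x + g x * T x = 0) :
    ∀ p : ℝ × ℝ × ℝ, p.1 ∈ I →
      fderiv ℝ (odeField g) p (prolong g T p) - fderiv ℝ (prolong g T) p (odeField g p)
        = (-(fderiv ℝ (xiF g T) p (1, 0, 0) + p.2.2 * fderiv ℝ (xiF g T) p (0, 1, 0)))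
            • odeField g p := by
  intro p hp
  have hg1s := smooth_deriv hI hg
  have hT1s := smooth_deriv hI hT
  have hT2s := smooth_deriv hI hT1s
  have hga : HasDerivAt g (deriv g p.1) p.1 := hasDeriv_of_smooth hI hg hp
  have hg1a : HasDerivAt (deriv g) (deriv (deriv g) p.1) p.1 := hasDeriv_of_smooth hI hg1s hp
  have hTa : HasDerivAt T (deriv T p.1) p.1 := hasDeriv_of_smooth hI hT hp
  have hT1a : HasDerivAt (deriv T) (deriv (deriv T) p.1) p.1 := hasDeriv_of_smooth hI hT1s hp
  have hT2a : HasDerivAt (deriv (deriv T)) (deriv (deriv (deriv T)) p.1) p.1 :=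
    hasDeriv_of_smooth hI hT2s hp
  have hgx0 : g p.1 ≠ 0 := hg0 _ hp
  have h2g : (2 : ℝ) * g p.1 ≠ 0 := mul_ne_zero two_ne_zero hgx0
  -- ODE facts
  have hode : deriv (deriv T) p.1 = deriv g p.1 / (2 * g p.1) * deriv T p.1 - g p.1 * T p.1 := by
    have := hTode p.1 hp; linarith
  have heq : deriv (deriv T) =ᶠ[𝓝 p.1]
      (fun s => deriv g s / (2 * g s) * deriv T s - g s * T s) := by
    filter_upwards [hI.mem_nhds hp] with s hs
    have := hTode s hs; linarith
  have hR := ((hg1a.div (hga.const_mul 2) h2g).mul hT1a).sub (hga.mul hTa)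
  have hode3 := heq.deriv_eq.trans hR.deriv
  -- derivative of the ODE field
  have hω : HasDerivAt (fun s => deriv g s / (2 * g s))
      ((deriv (deriv g) p.1 * (2 * g p.1) - deriv g p.1 * (2 * deriv g p.1)) / (2 * g p.1) ^ 2)
      p.1 := hg1a.div (hga.const_mul 2) h2g
  have hA : HasFDerivAt (odeField g) _ p :=
    HasFDerivAt.prodMk (hasFDerivAt_const (1 : ℝ) p)
      (HasFDerivAt.prodMk (hV p) (((comp1 hω).mul (hV p)).sub ((comp1 hga).mul (hY p))))
  -- closed form of the prolongation near p, and its derivative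
  have hev : prolong g T =ᶠ[𝓝 p] (fun q : ℝ × ℝ × ℝ =>
      (-deriv T q.1 / g q.1 * q.2.1,
       T q.1 * (q.2.1 * q.2.1),
       deriv T q.1 * (q.2.1 * q.2.1) + q.2.2 * (2 * T q.1 * q.2.1)
         - q.2.2 * ((-(deriv (deriv T) q.1) * g q.1 + deriv T q.1 * deriv g q.1) / g q.1 ^ 2
              * q.2.1 + q.2.2 * (-(deriv T q.1) / g q.1)))) := by
    filter_upwards [(hI.preimage continuous_fst).mem_nhds hp] with q hq
    simp only [prolong, xi_eval hI hg hg0 hT hq, eta_eval hI hT hq, xiF, etaF, Prod.mk.injEq]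
    exact ⟨by ring, by ring, by ring⟩
  have hc2 : HasDerivAt (fun s => -deriv T s / g s)
      ((-(deriv (deriv T) p.1) * g p.1 - -(deriv T p.1) * deriv g p.1) / g p.1 ^ 2) p.1 :=
    (hT1a.neg).div hga hgx0
  have h2T : HasDerivAt (fun s => 2 * T s) (2 * deriv T p.1) p.1 := hTa.const_mul 2
  have hcoef : HasDerivAt
      (fun s => (-(deriv (deriv T) s) * g s + deriv T s * deriv g s) / g s ^ 2) _ p.1 :=
    ((hT2a.neg.mul hga).add (hT1a.mul hg1a)).div (hga.pow 2) (pow_ne_zero 2 hgx0)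
  have hP : HasFDerivAt (prolong g T) _ p :=
    HasFDerivAt.congr_of_eventuallyEq
      (HasFDerivAt.prodMk ((comp1 hc2).mul (hY p))
        (HasFDerivAt.prodMk ((comp1 hTa).mul ((hY p).mul (hY p)))
          ((((comp1 hT1a).mul ((hY p).mul (hY p))).add
              ((hV p).mul ((comp1 h2T).mul (hY p)))).sub
            ((hV p).mul (((comp1 hcoef).mul (hY p)).add ((hV p).mul (comp1 hc2)))))))
      hev
  rw [hA.fderiv, hP.fderiv, hev.eq_of_nhds]
  simp only [xi_eval hI hg hg0 hT hp, odeField,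
    ContinuousLinearMap.prod_apply, ContinuousLinearMap.add_apply,
    ContinuousLinearMap.sub_apply, ContinuousLinearMap.coe_comp', Function.comp_apply,
    ContinuousLinearMap.smulRight_apply, ContinuousLinearMap.one_apply,
    ContinuousLinearMap.smul_apply, ContinuousLinearMap.coe_fst', ContinuousLinearMap.coe_snd',
    ContinuousLinearMap.neg_apply, ContinuousLinearMap.coe_smul', Pi.smul_apply,
    hasFDerivAt_const, smul_eq_mul, Prod.smul_mk, Prod.mk_sub_mk, Prod.mk.injEq,
    ContinuousLinearMap.zero_apply, Pi.mul_apply, Pi.add_apply, Pi.neg_apply, Pi.div_apply,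
    Pi.sub_apply]
  refine ⟨?_, ?_, ?_⟩
  · field_simp
    ring
  · field_simp
    ring
  · rw [hode3, Pi.div_apply]
    rw [hode]
    field_simp
    ring

/-- If `T` and `U` solve `y'' − (g'/(2g))y' + g y = 0` on an open
interval `I` where the smooth `g` is nowhere zero, then the prolongations of
`X₄ = −(T'/g)y ∂/∂x + T y² ∂/∂y` and `X₅ = −(U'/g)y ∂/∂x + U y² ∂/∂y` satisfy
`[Ẋ, A] = −(∂ξ/∂x + v ∂ξ/∂y)·A`, i.e. `X₄` and `X₅` are Lie point symmetries. -/
theorem pointSymmetry_of_linear_ode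
    (I : Set ℝ) (hI : IsOpen I) (hIconv : Convex ℝ I)
    (g T U : ℝ → ℝ)
    (hg : ContDiffOn ℝ (⊤ : ℕ∞) g I) (hg0 : ∀ x ∈ I, g x ≠ 0)
    (hT : ContDiffOn ℝ (⊤ : ℕ∞) T I) (hU : ContDiffOn ℝ (⊤ : ℕ∞) U I)
    (hTode : ∀ x ∈ I,
      deriv (deriv T) x - deriv g x / (2 * g x) * deriv T x + g x * T x = 0)
    (hUode : ∀ x ∈ I,
      deriv (deriv U) x - deriv g x / (2 * g x) * deriv U x + g x * U x = 0) :
    (∀ p : ℝ × ℝ × ℝ, p.1 ∈ I →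
      fderiv ℝ (odeField g) p (prolong g T p) - fderiv ℝ (prolong g T) p (odeField g p)
        = (-(fderiv ℝ (xiF g T) p (1, 0, 0) + p.2.2 * fderiv ℝ (xiF g T) p (0, 1, 0)))
            • odeField g p) ∧
    (∀ p : ℝ × ℝ × ℝ, p.1 ∈ I →
      fderiv ℝ (odeField g) p (prolong g U p) - fderiv ℝ (prolong g U) p (odeField g p)
        = (-(fderiv ℝ (xiF g U) p (1, 0, 0) + p.2.2 * fderiv ℝ (xiF g U) p (0, 1, 0)))
            • odeField g p) := by
  exact ⟨bracket_main hI hg hg0 hT hTode, bracket_main hI hg hg0 hU hUode⟩
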